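/- In the setting of the generalized Ore localization A[S_1,...,S_m] (with assumptions (O1), (O2)), the following universal property holds: for any ring homomorphism ψ: A → B such that ψ(s) is invertible in ψ(e_i) B ψ(e_i) for every s ∈ S_i and every i, there is a unique ring homomorphism σ: A[S_1,...,S_m] → B with σ ∘ φ = ψ. Moreover, if ψ is injective then σ is injective. -/

import Mathlib

/-!
The generalized Ore localization is the classical left Ore localization of `A` at
`T = {∑ i, s i | s i ∈ S i}`. Orthogonality of the `e i` makes `T` multiplicative, since
`(∑ s i) * (∑ t i) = ∑ s i * t i`; (O1) makes the elements of `T` regular; and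
(O2), applied once for each pair of corners `e j * A * e i`, yields the left Ore condition.
A ring map inverts `∑ s i` as soon as it inverts each `s i` in its corner, the inverse being the
sum of the corner inverses; conversely the unit `t = s + ∑_{j ≠ i} e j` of the localization
gives a corner inverse of `s`. The universal property is then that of the Ore localization.
-/

open Finset OreLocalization

section Corner

variable {R : Type*}

theorem IsIdempotentElem.mul_left_of_mul_mul_eq [Semigroup R] {p q b : R}
    (hp : IsIdempotentElem p) (h : p * b * q = b) : p * b = b := by
  rw [← h, ← mul_assoc, ← mul_assoc, hp.eq]

theorem IsIdempotentElem.mul_right_of_mul_mul_eq [Semigroup R] {p q b : R}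
    (hq : IsIdempotentElem q) (h : p * b * q = b) : b * q = b := by
  rw [← h, mul_assoc, hq.eq]

theorem IsIdempotentElem.mul_mul_mul_eq [Semigroup R] {p q b : R}
    (hp : IsIdempotentElem p) (hq : IsIdempotentElem q) : p * (p * b * q) * q = p * b * q := by
  rw [← mul_assoc, ← mul_assoc, hp.eq, mul_assoc, hq.eq]

theorem IsIdempotentElem.exists_corner_inverse [Monoid R] {E s : R} (hE : IsIdempotentElem E)
    (u : Rˣ) (hl : E * u = s) (hr : u * E = s) :
    ∃ x, E * x * E = x ∧ s * x = E ∧ x * s = E := by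
  have hEu : E * u = u * E := hl.trans hr.symm
  have hinv : E * ↑u⁻¹ = ↑u⁻¹ * E := (Commute.units_inv_right hEu).eq
  refine ⟨E * ↑u⁻¹, ?_, ?_, ?_⟩
  · calc E * (E * ↑u⁻¹) * E = E * E * (↑u⁻¹ * E) := by simp only [mul_assoc]
      _ = E * ↑u⁻¹ := by rw [hE.eq, ← hinv, ← mul_assoc, hE.eq]
  · rw [← hr, mul_assoc, ← mul_assoc E, hE.eq, ← mul_assoc, ← hEu, mul_assoc,
      Units.mul_inv, mul_one]
  · rw [← hl, mul_assoc, ← mul_assoc _ E, ← hinv, mul_assoc, Units.inv_mul, mul_one, hE.eq]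

end Corner

namespace OrthogonalIdempotents

variable {R ι : Type*} [Semiring R] {e : ι → R}

theorem mul_eq_zero_of_mul_left (he : OrthogonalIdempotents e) {i j : ι} (hij : i ≠ j) {b : R}
    (hb : e j * b = b) : e i * b = 0 := by
  rw [← hb, ← mul_assoc, he.ortho hij, zero_mul]

theorem mul_eq_zero_of_mul_right (he : OrthogonalIdempotents e) {i j : ι} (hij : i ≠ j) {b : R}
    (hb : b * e i = b) : b * e j = 0 := by
  rw [← hb, mul_assoc, he.ortho hij, mul_zero]

variable [Fintype ι] {c : ι → R}

theorem mul_sum_eq (he : OrthogonalIdempotents e) (hc : ∀ i, e i * c i = c i) (j : ι) :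
    e j * ∑ i, c i = c j := by
  rw [mul_sum, sum_eq_single j (fun i _ hij => he.mul_eq_zero_of_mul_left hij.symm (hc i))
    (by simp), hc j]

theorem sum_mul_eq (he : OrthogonalIdempotents e) (hc : ∀ i, c i * e i = c i) (j : ι) :
    (∑ i, c i) * e j = c j := by
  rw [sum_mul, sum_eq_single j (fun i _ hij => he.mul_eq_zero_of_mul_right hij (hc i))
    (by simp), hc j]

theorem mul_sum_eq_mul (he : OrthogonalIdempotents e) (hc : ∀ i, e i * c i = c i) {b : R} {j : ι}
    (hb : b * e j = b) : b * ∑ i, c i = b * c j := by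
  conv_lhs => rw [← hb]
  rw [mul_assoc, he.mul_sum_eq hc]

theorem sum_mul_sum_eq_sum_mul (he : OrthogonalIdempotents e) {d : ι → R}
    (hc : ∀ i, c i * e i = c i) (hd : ∀ i, e i * d i = d i) :
    (∑ i, c i) * (∑ i, d i) = ∑ i, c i * d i := by
  rw [sum_mul]
  exact sum_congr rfl fun i _ => he.mul_sum_eq_mul hd (hc i)

end OrthogonalIdempotents

theorem CompleteOrthogonalIdempotents.isUnit_sum {R ι : Type*} [Semiring R] [Fintype ι]
    {e : ι → R} (he : CompleteOrthogonalIdempotents e) {c y : ι → R}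
    (hc : ∀ i, e i * c i * e i = c i) (hy : ∀ i, e i * y i * e i = y i)
    (hcy : ∀ i, c i * y i = e i) (hyc : ∀ i, y i * c i = e i) : IsUnit (∑ i, c i) := by
  have hcl i := (he.idem i).mul_left_of_mul_mul_eq (hc i)
  have hcr i := (he.idem i).mul_right_of_mul_mul_eq (hc i)
  have hyl i := (he.idem i).mul_left_of_mul_mul_eq (hy i)
  have hyr i := (he.idem i).mul_right_of_mul_mul_eq (hy i)
  refine ⟨⟨∑ i, c i, ∑ i, y i, ?_, ?_⟩, rfl⟩
  · rw [he.sum_mul_sum_eq_sum_mul hcr hyl]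
    simp only [hcy, he.complete]
  · rw [he.sum_mul_sum_eq_sum_mul hyr hcl]
    simp only [hyc, he.complete]

namespace OreLocalization

variable {R : Type*} [Ring R] {S : Submonoid R}

theorem nonempty_oreSet_of_le_nonZeroDivisorsRight (hS : S ≤ nonZeroDivisorsRight R)
    (hore : ∀ (r : R) (s : S), ∃ (r' : R) (s' : S), s' * r = r' * s) : Nonempty (OreSet S) := by
  refine nonempty_oreSet_iff.mpr ⟨fun r₁ r₂ s h => ⟨1, ?_⟩, hore⟩
  rw [sub_eq_zero.mp (hS s.2 (r₁ - r₂) (by rw [sub_mul, h, sub_self]))]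

variable [OreSet S] {C : Type*}

theorem existsUnique_comp_numeratorRingHom_eq [Semiring C] (ψ : R →+* C)
    (hψ : ∀ s : S, IsUnit (ψ s)) :
    ∃! σ : R[S⁻¹] →+* C, σ.comp numeratorRingHom = ψ := by
  let fS : S →* Cˣ := IsUnit.liftRight (ψ.toMonoidHom.comp S.subtype) hψ
  have hf (s : S) : ψ s = fS s :=
    (IsUnit.coe_liftRight (ψ.toMonoidHom.comp S.subtype) hψ s).symm
  exact ⟨universalHom ψ fS hf, RingHom.ext fun r => universalHom_commutes ψ fS hf,
    fun σ hσ => universalHom_unique ψ fS hf σ (RingHom.congr_fun hσ)⟩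

theorem injective_of_injective_comp_numeratorRingHom [Ring C] (σ : R[S⁻¹] →+* C)
    (h : Function.Injective (σ.comp numeratorRingHom)) : Function.Injective σ := by
  refine (injective_iff_map_eq_zero σ).mpr fun x hx => ?_
  induction x using OreLocalization.ind with | _ r s
  have : σ.comp numeratorRingHom r = σ.comp numeratorRingHom 0 := by
    rw [map_zero, RingHom.comp_apply, numeratorRingHom_apply,
      ← OreLocalization.mul_cancel (s := s), map_mul, hx, mul_zero]
  rw [h this, zero_oreDiv]

end OreLocalization

structure IsCornerMultiplicative {A ι : Type*} [Mul A] (e : ι → A) (S : ι → Set A) :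
    Prop where
  self_mem : ∀ i, e i ∈ S i
  mul_mem : ∀ i, ∀ s ∈ S i, ∀ t ∈ S i, s * t ∈ S i
  corner : ∀ i, ∀ s ∈ S i, e i * s * e i = s

namespace IsCornerMultiplicative

variable {A ι : Type*} [Ring A] {e : ι → A} {S : ι → Set A}

theorem idem_mul (hS : IsCornerMultiplicative e S) (he : OrthogonalIdempotents e) {i : ι}
    {s : A} (hs : s ∈ S i) : e i * s = s :=
  (he.idem i).mul_left_of_mul_mul_eq (hS.corner i s hs)

theorem mul_idem (hS : IsCornerMultiplicative e S) (he : OrthogonalIdempotents e) {i : ι}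
    {s : A} (hs : s ∈ S i) : s * e i = s :=
  (he.idem i).mul_right_of_mul_mul_eq (hS.corner i s hs)

theorem exists_common_ore_multiplier (hS : IsCornerMultiplicative e S)
    (he : OrthogonalIdempotents e)
    (hO2 : ∀ i j, ∀ a : A, e j * a * e i = a → ∀ s ∈ S i,
      ∃ b u, e j * b * e i = b ∧ u ∈ S j ∧ u * a = b * s)
    {j : ι} {a c : ι → A} (ha : ∀ i, e j * a i * e i = a i) (hc : ∀ i, c i ∈ S i)
    (F : Finset ι) :
    ∃ u ∈ S j, ∀ i ∈ F, ∃ b, e j * b * e i = b ∧ u * a i = b * c i := by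
  induction F using Finset.cons_induction with
  | empty => exact ⟨e j, hS.self_mem j, by simp⟩
  | cons i F _ ih =>
    obtain ⟨u, hu, hF⟩ := ih
    have hua : e j * (u * a i) * e i = u * a i := by
      rw [← mul_assoc, hS.idem_mul he hu, mul_assoc, (he.idem i).mul_right_of_mul_mul_eq (ha i)]
    obtain ⟨b, v, hb, hv, hvb⟩ := hO2 i j (u * a i) hua (c i) (hc i)
    refine ⟨v * u, hS.mul_mem j _ hv _ hu, ?_⟩
    rintro k hk
    rcases Finset.mem_cons.mp hk with rfl | hk
    · exact ⟨b, hb, by rw [mul_assoc, hvb]⟩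
    · obtain ⟨b', hb', hub'⟩ := hF k hk
      refine ⟨v * b', ?_, by rw [mul_assoc, hub', mul_assoc]⟩
      rw [← mul_assoc, hS.idem_mul he hv, mul_assoc, (he.idem k).mul_right_of_mul_mul_eq hb']

variable [Fintype ι]

def sumSubmonoid (hS : IsCornerMultiplicative e S) (he : CompleteOrthogonalIdempotents e) :
    Submonoid A where
  carrier := {t | ∃ c : ι → A, (∀ i, c i ∈ S i) ∧ ∑ i, c i = t}
  mul_mem' := by
    rintro _ _ ⟨c, hc, rfl⟩ ⟨d, hd, rfl⟩
    exact ⟨fun i => c i * d i, fun i => hS.mul_mem i _ (hc i) _ (hd i),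
      (he.sum_mul_sum_eq_sum_mul (fun i => hS.mul_idem he.1 (hc i))
        (fun i => hS.idem_mul he.1 (hd i))).symm⟩
  one_mem' := ⟨e, hS.self_mem, he.complete⟩

theorem sumSubmonoid_le_nonZeroDivisorsLeft (hS : IsCornerMultiplicative e S)
    (he : CompleteOrthogonalIdempotents e)
    (hO1 : ∀ i, ∀ s ∈ S i, ∀ g : A, s * (e i * g) = 0 → e i * g = 0) :
    hS.sumSubmonoid he ≤ nonZeroDivisorsLeft A := by
  rintro _ ⟨c, hc, rfl⟩ r h
  have hcomp (j : ι) : e j * r = 0 := by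
    refine hO1 j (c j) (hc j) r ?_
    rw [← mul_assoc, hS.mul_idem he.1 (hc j),
      ← he.mul_sum_eq (fun i => hS.idem_mul he.1 (hc i)), mul_assoc, h, mul_zero]
  rw [← one_mul r, ← he.complete, sum_mul]
  exact sum_eq_zero fun j _ => hcomp j

theorem sumSubmonoid_le_nonZeroDivisorsRight (hS : IsCornerMultiplicative e S)
    (he : CompleteOrthogonalIdempotents e)
    (hO1 : ∀ i, ∀ s ∈ S i, ∀ h : A, h * e i * s = 0 → h * e i = 0) :
    hS.sumSubmonoid he ≤ nonZeroDivisorsRight A := by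
  rintro _ ⟨c, hc, rfl⟩ r h
  have hcomp (j : ι) : r * e j = 0 := by
    refine hO1 j (c j) (hc j) r ?_
    rw [mul_assoc, hS.idem_mul he.1 (hc j),
      ← he.sum_mul_eq (fun i => hS.mul_idem he.1 (hc i)), ← mul_assoc, h, zero_mul]
  rw [← mul_one r, ← he.complete, mul_sum]
  exact sum_eq_zero fun j _ => hcomp j

theorem sumSubmonoid_ore (hS : IsCornerMultiplicative e S)
    (he : CompleteOrthogonalIdempotents e)
    (hO2 : ∀ i j, ∀ a : A, e j * a * e i = a → ∀ s ∈ S i,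
      ∃ b u, e j * b * e i = b ∧ u ∈ S j ∧ u * a = b * s)
    (r : A) (t : hS.sumSubmonoid he) :
    ∃ (r' : A) (t' : hS.sumSubmonoid he), t' * r = r' * t := by
  obtain ⟨_, c, hc, rfl⟩ := t
  -- `u j ∈ S j` is a common left multiplier for the pieces `e j * r * e i` of the `j`-th row
  choose u hu hub using fun j => hS.exists_common_ore_multiplier he.1 hO2
    (a := fun i => e j * r * e i) (fun i => (he.idem j).mul_mul_mul_eq (he.idem i)) hc univ
  choose b hb hbc using fun j i => hub j i (mem_univ i)
  refine ⟨∑ j, ∑ i, b j i, ⟨∑ j, u j, u, hu, rfl⟩, ?_⟩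
  have hur (j : ι) : u j * r = ∑ i, u j * (e j * r * e i) := by
    rw [← mul_sum, ← mul_sum, he.complete, mul_one, ← mul_assoc, hS.mul_idem he.1 (hu j)]
  calc (∑ j, u j) * r = ∑ j, ∑ i, b j i * c i := by
        simp only [sum_mul, hur, hbc]
    _ = (∑ j, ∑ i, b j i) * ∑ i, c i := by
        simp only [sum_mul]
        exact sum_congr rfl fun j _ => sum_congr rfl fun i _ =>
          (he.mul_sum_eq_mul (fun k => hS.idem_mul he.1 (hc k))
            ((he.idem i).mul_right_of_mul_mul_eq (hb j i))).symm

theorem exists_mem_sumSubmonoid_mul_eq (hS : IsCornerMultiplicative e S)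
    (he : CompleteOrthogonalIdempotents e) {i : ι} {s : A} (hs : s ∈ S i) :
    ∃ t ∈ hS.sumSubmonoid he, e i * t = s ∧ t * e i = s := by
  classical
  have hc : ∀ k, Function.update e i s k ∈ S k := by
    intro k
    rcases eq_or_ne k i with rfl | hk
    · simpa using hs
    · simpa [hk] using hS.self_mem k
  refine ⟨_, ⟨_, hc, rfl⟩, ?_, ?_⟩
  · simpa using he.mul_sum_eq (fun k => hS.idem_mul he.1 (hc k)) i
  · simpa using he.sum_mul_eq (fun k => hS.mul_idem he.1 (hc k)) i

theorem isUnit_map_of_mem_sumSubmonoid (hS : IsCornerMultiplicative e S)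
    (he : CompleteOrthogonalIdempotents e) {C : Type*} [Ring C] (ψ : A →+* C)
    (hψ : ∀ i, ∀ s ∈ S i, ∃ y : C,
      ψ (e i) * y * ψ (e i) = y ∧ ψ s * y = ψ (e i) ∧ y * ψ s = ψ (e i))
    {t : A} (ht : t ∈ hS.sumSubmonoid he) : IsUnit (ψ t) := by
  obtain ⟨c, hc, rfl⟩ := ht
  choose y hy hcy hyc using fun i => hψ i (c i) (hc i)
  rw [map_sum]
  exact (he.map ψ).isUnit_sum (fun i => by simp only [Function.comp_apply, ← map_mul,
    hS.corner i _ (hc i)]) hy hcy hyc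

end IsCornerMultiplicative

theorem stmt8_general (A : Type u) [Ring A] (A0 : Subring A)
    (m : ℕ) (e : Fin m → A)
    (hid : ∀ i, IsIdempotentElem (e i))
    (horth : ∀ i j, i ≠ j → e i * e j = 0)
    (hsum : ∑ i, e i = 1)
    (S : Fin m → Set A)
    (hSe : ∀ i, e i ∈ S i)
    (hSmul : ∀ i, ∀ s ∈ S i, ∀ t ∈ S i, s * t ∈ S i)
    (hScorner : ∀ i, ∀ s ∈ S i, ∃ f ∈ A0, s = e i * f * e i)
    (O1 : ∀ i, ∀ s ∈ S i,
      (∀ g : A, s * (e i * g) = 0 → e i * g = 0) ∧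
      (∀ h : A, h * e i * s = 0 → h * e i = 0))
    (O2 : ∀ i j : Fin m, ∀ a : A, e j * a * e i = a → ∀ s ∈ S i, ∀ t ∈ S j,
      ∃ b c u v : A, e j * b * e i = b ∧ e j * c * e i = c ∧ u ∈ S j ∧ v ∈ S i ∧
        u * a = b * s ∧ a * v = t * c) :
    ∃ (B : Type u) (_ : Ring B) (φ : A →+* B),
      Function.Injective φ ∧
        (∀ i, ∀ s ∈ S i, ∃ x : B,
          φ (e i) * x * φ (e i) = x ∧ φ s * x = φ (e i) ∧ x * φ s = φ (e i)) ∧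
        ∀ (C : Type u) (_ : Ring C) (ψ : A →+* C),
          (∀ i, ∀ s ∈ S i, ∃ y : C,
            ψ (e i) * y * ψ (e i) = y ∧ ψ s * y = ψ (e i) ∧ y * ψ s = ψ (e i)) →
          (∃! σ : B →+* C, σ.comp φ = ψ) ∧
            (Function.Injective ψ →
              ∀ σ : B →+* C, σ.comp φ = ψ → Function.Injective σ) := by
  have he : CompleteOrthogonalIdempotents e := ⟨⟨hid, fun i j h => horth i j h⟩, hsum⟩
  have hS : IsCornerMultiplicative e S := ⟨hSe, hSmul, fun i s hs => by
    obtain ⟨f, -, rfl⟩ := hScorner i s hs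
    exact (hid i).mul_mul_mul_eq (hid i)⟩
  have hore := hS.sumSubmonoid_ore he fun i j a ha s hs => by
    obtain ⟨b, -, u, -, hb, -, hu, -, hub, -⟩ := O2 i j a ha s hs (e j) (hSe j)
    exact ⟨b, u, hb, hu, hub⟩
  let _ : OreSet (hS.sumSubmonoid he) := Classical.choice <|
    nonempty_oreSet_of_le_nonZeroDivisorsRight
      (hS.sumSubmonoid_le_nonZeroDivisorsRight he fun i s hs => (O1 i s hs).2) hore
  refine ⟨_, inferInstance, numeratorRingHom, fun a b h => numeratorHom_inj
    (hS.sumSubmonoid_le_nonZeroDivisorsLeft he fun i s hs => (O1 i s hs).1) h,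
    fun i s hs => ?_, fun C _ ψ hψ => ?_⟩
  · obtain ⟨t, ht, hl, hr⟩ := hS.exists_mem_sumSubmonoid_mul_eq he hs
    exact ((hid i).map numeratorRingHom).exists_corner_inverse (numeratorUnit ⟨t, ht⟩)
      (by rw [← hl, map_mul]; rfl) (by rw [← hr, map_mul]; rfl)
  · refine ⟨existsUnique_comp_numeratorRingHom_eq ψ fun t =>
      hS.isUnit_map_of_mem_sumSubmonoid he ψ hψ t.2, fun hinj σ hσ => ?_⟩
    exact injective_of_injective_comp_numeratorRingHom σ (hσ ▸ hinj)

/-- Universal property of the generalized Ore localization: under the generalized Ore conditions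
(O1), (O2), there is a ring `B = A[S_1,…,S_m]` with an injective canonical map `φ : A → B`
inverting each `S i` inside the corner `φ(e_i) B φ(e_i)`, such that for any ring homomorphism
`ψ : A → C` with every `ψ(s)`, `s ∈ S i`, invertible in `ψ(e_i) C ψ(e_i)`, there is a unique
ring homomorphism `σ : B → C` with `σ ∘ φ = ψ`; moreover if `ψ` is injective then so is `σ`. -/
theorem stmt8 (A : Type u) [Ring A] (A0 : Subring A)
    (hA0 : ∀ x y : A, x ∈ A0 → y ∈ A0 → x * y = y * x)
    (m : ℕ) (e : Fin m → A)
    (hid : ∀ i, IsIdempotentElem (e i))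
    (horth : ∀ i j, i ≠ j → e i * e j = 0)
    (hsum : ∑ i, e i = 1)
    (hcomm : ∀ f : A, f ∈ A0 → ∀ i, f * e i = e i * f)
    (S : Fin m → Set A)
    (hSe : ∀ i, e i ∈ S i)
    (hSmul : ∀ i, ∀ s ∈ S i, ∀ t ∈ S i, s * t ∈ S i)
    (hScorner : ∀ i, ∀ s ∈ S i, ∃ f ∈ A0, s = e i * f * e i)
    (O1 : ∀ i, ∀ s ∈ S i,
      (∀ g : A, s * (e i * g) = 0 → e i * g = 0) ∧
      (∀ h : A, h * e i * s = 0 → h * e i = 0))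
    (O2 : ∀ i j : Fin m, ∀ a : A, e j * a * e i = a → ∀ s ∈ S i, ∀ t ∈ S j,
      ∃ b c u v : A, e j * b * e i = b ∧ e j * c * e i = c ∧ u ∈ S j ∧ v ∈ S i ∧
        u * a = b * s ∧ a * v = t * c) :
    ∃ (B : Type u) (_ : Ring B) (φ : A →+* B),
      Function.Injective φ ∧
        (∀ i, ∀ s ∈ S i, ∃ x : B,
          φ (e i) * x * φ (e i) = x ∧ φ s * x = φ (e i) ∧ x * φ s = φ (e i)) ∧
        ∀ (C : Type u) (_ : Ring C) (ψ : A →+* C),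
          (∀ i, ∀ s ∈ S i, ∃ y : C,
            ψ (e i) * y * ψ (e i) = y ∧ ψ s * y = ψ (e i) ∧ y * ψ s = ψ (e i)) →
          (∃! σ : B →+* C, σ.comp φ = ψ) ∧
            (Function.Injective ψ →
              ∀ σ : B →+* C, σ.comp φ = ψ → Function.Injective σ) :=
  stmt8_general A A0 m e hid horth hsum S hSe hSmul hScorner O1 O2
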